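/- Let n ≥ 5 be an integer and let t ∈ (0, cos(2π/n)) satisfy T_n′′′(t) = 0. Then φ_n(t) := T_n(t) + t + 1 − ((2t+1)/n²)·T_n′(t) > 0. In fact, φ_n(t) = (t+1)·(1 + ((n²−1−(n²−4)t)/(n²−1−(n²+2)t²))·T_n(t)), the denominator n²−1−(n²+2)t² is positive, and φ_n(t) ≥ (t+1)·t·(n²−4−(n²+2)t)/(n²−1−(n²+2)t²) > 0. -/

import Mathlib

open Polynomial Real

/-- The `n`-th Chebyshev polynomial of the first kind, as a real polynomial. -/
noncomputable def chebT (n : ℕ) : Polynomial ℝ := Polynomial.Chebyshev.T ℝ (n : ℤ)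

/-- `φ_n(x) = T_n(x) + x + 1 - ((2x+1)/n²) T_n'(x)`. -/
noncomputable def φ (n : ℕ) (x : ℝ) : ℝ :=
  (chebT n).eval x + x + 1 - (2 * x + 1) / (n : ℝ) ^ 2 * (derivative (chebT n)).eval x

/-! Differentiating the Chebyshev equation `(1 - x²) T'' = x T' - n² T` gives
`(1 - x²) T''' = 3x T'' - (n² - 1) T'`. At a zero `t` of `T'''`, eliminating `T''(t)` yields
`T'(t) · D = -3 t n² T(t)` with `D = n² - 1 - (n² + 2) t²`, which turns `φ_n(t)` into
`(t + 1) (1 + K / D · T(t))`, `K = n² - 1 - (n² - 4) t`. The bound `t < cos(2π/n) ≤ 1 - 8/n²`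
makes `D > 0` and `K ≥ 0`, so `T(t) ≥ -1` gives `φ_n(t) ≥ (t + 1)(1 - K/D)`, and
`D - K = t (n² - 4 - (n² + 2) t) > 0`. -/

namespace Polynomial.Chebyshev

variable {R : Type*} [CommRing R]

theorem derivative_T_eval_mul_eq_of_iterate_derivative_T_eval_eq_zero (n : ℤ) {x : R}
    (h : (derivative^[3] (T R n)).eval x = 0) :
    (derivative (T R n)).eval x * (n ^ 2 - 1 - (n ^ 2 + 2) * x ^ 2) =
      -3 * x * n ^ 2 * (T R n).eval x := by
  have h₂ := one_sub_X_sq_mul_iterate_derivative_T_eval n 0 x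
  have h₃ := one_sub_X_sq_mul_iterate_derivative_T_eval n 1 x
  norm_num at h h₂ h₃
  rw [h] at h₃
  linear_combination 3 * x * h₂ + (1 - x ^ 2) * h₃

end Polynomial.Chebyshev

theorem cos_two_pi_div_le {n : ℕ} (hn : 2 ≤ n) : cos (2 * π / n) ≤ 1 - 8 / (n : ℝ) ^ 2 := by
  have hn' : (2 : ℝ) ≤ n := by exact_mod_cast hn
  have hx : |2 * π / n| ≤ π := by
    rw [abs_of_nonneg (by positivity), div_le_iff₀ (by positivity)]
    nlinarith [pi_pos]
  convert cos_le_one_sub_mul_cos_sq hx using 2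
  field_simp
  ring

section Bounds

variable {N t : ℝ}

theorem mul_lt_sub_of_lt_one_sub_div {c : ℝ} (hN : 0 < N) (ht : t < 1 - c / N) :
    t * N < N - c := by
  have := mul_lt_mul_of_pos_right ht hN
  rwa [sub_mul, div_mul_cancel₀ _ hN.ne', one_mul] at this

theorem sub_one_sub_add_two_mul_sq_pos (hN : 0 < N) (ht₀ : 0 < t) (ht : t < 1 - 8 / N) :
    0 < N - 1 - (N + 2) * t ^ 2 := by
  nlinarith [mul_pos ht₀ hN, mul_lt_sub_of_lt_one_sub_div hN ht]

theorem sub_four_sub_add_two_mul_pos (hN : 0 < N) (ht : t < 1 - 8 / N) :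
    0 < N - 4 - (N + 2) * t := by
  nlinarith [mul_lt_sub_of_lt_one_sub_div hN ht]

theorem sub_one_sub_sub_four_mul_nonneg (hN : 0 < N) (ht₀ : 0 < t) (ht : t < 1 - 8 / N) :
    0 ≤ N - 1 - (N - 4) * t := by
  nlinarith [mul_lt_sub_of_lt_one_sub_div hN ht]

theorem mul_div_le_mul_one_add_div_mul {A : ℝ} (ht : -1 ≤ t)
    (hD : 0 < N - 1 - (N + 2) * t ^ 2) (hK : 0 ≤ N - 1 - (N - 4) * t) (hA : -1 ≤ A) :
    (t + 1) * t * (N - 4 - (N + 2) * t) / (N - 1 - (N + 2) * t ^ 2) ≤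
      (t + 1) * (1 + (N - 1 - (N - 4) * t) / (N - 1 - (N + 2) * t ^ 2) * A) :=
  calc (t + 1) * t * (N - 4 - (N + 2) * t) / (N - 1 - (N + 2) * t ^ 2)
      = (t + 1) * (1 + (N - 1 - (N - 4) * t) / (N - 1 - (N + 2) * t ^ 2) * (-1)) := by
        rw [mul_neg_one, ← sub_eq_add_neg, one_sub_div hD.ne']
        ring
    _ ≤ _ := by
        have : 0 ≤ t + 1 := by linarith
        gcongr

end Bounds

theorem φ_eq_of_iterate_derivative_eval_eq_zero {n : ℕ} (hn : n ≠ 0) {t : ℝ}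
    (hD : (n : ℝ) ^ 2 - 1 - ((n : ℝ) ^ 2 + 2) * t ^ 2 ≠ 0)
    (h : (derivative^[3] (chebT n)).eval t = 0) :
    φ n t = (t + 1) * (1 + ((n : ℝ) ^ 2 - 1 - ((n : ℝ) ^ 2 - 4) * t)
        / ((n : ℝ) ^ 2 - 1 - ((n : ℝ) ^ 2 + 2) * t ^ 2) * (chebT n).eval t) := by
  have hT := Chebyshev.derivative_T_eval_mul_eq_of_iterate_derivative_T_eval_eq_zero _ h
  push_cast at hT
  rw [φ, chebT, eq_div_of_mul_eq hD hT]
  -- so that `field_simp` treats the denominator as an atom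
  generalize hE : (n : ℝ) ^ 2 - 1 - ((n : ℝ) ^ 2 + 2) * t ^ 2 = D at hD
  field_simp
  linear_combination (-(Chebyshev.T ℝ n).eval t) * hE

/-- If `n ≥ 5` and `t ∈ (0, cos(2π/n))` is a zero of `T_n'''`, then `φ_n(t) > 0`;
in fact `φ_n(t) = (t+1)(1 + ((n²-1-(n²-4)t)/(n²-1-(n²+2)t²)) T_n(t))`, the
denominator `n²-1-(n²+2)t²` is positive, and
`φ_n(t) ≥ (t+1) t (n²-4-(n²+2)t)/(n²-1-(n²+2)t²) > 0`. -/
theorem phi_positive_at_critical_points (n : ℕ) (hn : 5 ≤ n) (t : ℝ)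
    (ht : t ∈ Set.Ioo (0 : ℝ) (Real.cos (2 * π / n)))
    (h3 : (derivative (derivative (derivative (chebT n)))).eval t = 0) :
    0 < φ n t ∧
    φ n t = (t + 1) * (1 + ((n : ℝ) ^ 2 - 1 - ((n : ℝ) ^ 2 - 4) * t)
        / ((n : ℝ) ^ 2 - 1 - ((n : ℝ) ^ 2 + 2) * t ^ 2) * (chebT n).eval t) ∧
    0 < (n : ℝ) ^ 2 - 1 - ((n : ℝ) ^ 2 + 2) * t ^ 2 ∧
    (t + 1) * t * ((n : ℝ) ^ 2 - 4 - ((n : ℝ) ^ 2 + 2) * t)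
        / ((n : ℝ) ^ 2 - 1 - ((n : ℝ) ^ 2 + 2) * t ^ 2) ≤ φ n t ∧
    0 < (t + 1) * t * ((n : ℝ) ^ 2 - 4 - ((n : ℝ) ^ 2 + 2) * t)
        / ((n : ℝ) ^ 2 - 1 - ((n : ℝ) ^ 2 + 2) * t ^ 2) := by
  obtain ⟨ht₀, htc⟩ := ht
  have hN : (0 : ℝ) < (n : ℝ) ^ 2 := by positivity
  have ht : t < 1 - 8 / (n : ℝ) ^ 2 := htc.trans_le (cos_two_pi_div_le (by omega))
  have hD := sub_one_sub_add_two_mul_sq_pos hN ht₀ ht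
  have hφ := φ_eq_of_iterate_derivative_eval_eq_zero (by omega) hD.ne' h3
  have ht₁ : t < 1 := ht.trans_le (by simp only [sub_le_self_iff]; positivity)
  have hT : -1 ≤ (chebT n).eval t :=
    (abs_le.mp (Chebyshev.abs_eval_T_real_le_one _ (abs_le.mpr ⟨by linarith, ht₁.le⟩))).1
  have hlow : _ ≤ φ n t := hφ ▸ mul_div_le_mul_one_add_div_mul (by linarith) hD
    (sub_one_sub_sub_four_mul_nonneg hN ht₀ ht) hT
  have hpos := div_pos (mul_pos (mul_pos (by linarith : (0 : ℝ) < t + 1) ht₀)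
    (sub_four_sub_add_two_mul_pos hN ht)) hD
  exact ⟨hpos.trans_le hlow, hφ, hD, hlow, hpos⟩
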